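/- For every x ∈ [0,1], the series ∑_{k∈ℤ} e^{2πikx}/(1 + 4π²k²) converges absolutely and its sum equals (e^x + e^{1-x})/(2(e-1)). -/

import Mathlib

open Real

/-!
The right-hand side `g(t) = (eᵗ + e¹⁻ᵗ) / (2(e - 1)) = (eᵗ + e · e⁻ᵗ) / (2(e - 1))` is a combination
of two exponentials, so its Fourier coefficients on `[0, 1]` are explicit:
`∫₀¹ e^{(c - 2πin)t} dt = (e^c - 1) / (c - 2πin)` for `c = ±1`, and the two contributions
`1 / (2(1 ∓ 2πin))` add up to `1 / (1 + 4π²n²)`. Since `g(0) = g(1)`, `g` is a continuous function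
on the circle with summable Fourier coefficients, so its Fourier series converges to it pointwise.
-/

open Complex (I)
open scoped Complex
open MeasureTheory

theorem fourierCoeffOn_add {a b : ℝ} (hab : a < b) {f g : ℝ → ℂ}
    (hf : IntervalIntegrable f volume a b)
    (hg : IntervalIntegrable g volume a b) (n : ℤ) :
    fourierCoeffOn hab (f + g) n = fourierCoeffOn hab f n + fourierCoeffOn hab g n := by
  have hfourier : Continuous fun x : ℝ => fourier (-n) (x : AddCircle (b - a)) := by fun_prop
  simp only [fourierCoeffOn_eq_integral, Pi.add_apply, smul_eq_mul, mul_add]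
  rw [intervalIntegral.integral_add (hf.continuousOn_mul hfourier.continuousOn)
    (hg.continuousOn_mul hfourier.continuousOn), smul_add]

theorem fourierCoeffOn_exp_mul {T : ℝ} (hT : 0 < T) {c : ℂ} {n : ℤ}
    (hc : c * T ≠ 2 * π * I * n) :
    fourierCoeffOn hT (fun t : ℝ => cexp (c * t)) n
      = (cexp (c * T) - 1) / (c * T - 2 * π * I * n) := by
  have hT' : (T : ℂ) ≠ 0 := mod_cast hT.ne'
  set d : ℂ := c - 2 * π * I * n / T with hd_def
  have hdT : d * T = c * T - 2 * π * I * n := by rw [hd_def]; field_simp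
  have hd : d ≠ 0 := by
    intro h
    rw [h, zero_mul, eq_comm, sub_eq_zero] at hdT
    exact hc hdT
  have hintegrand : ∀ t : ℝ,
      fourier (-n) (t : AddCircle (T - 0)) • cexp (c * t) = cexp (d * t) := by
    intro t
    rw [fourier_coe_apply, smul_eq_mul, ← Complex.exp_add, hd_def]
    congr 1
    push_cast
    ring
  have hperiod : cexp (d * T) = cexp (c * T) := by
    rw [hdT, Complex.exp_sub, mul_comm _ (n : ℂ), Complex.exp_int_mul_two_pi_mul_I, div_one]
  rw [fourierCoeffOn_eq_integral]
  simp_rw [hintegrand]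
  rw [integral_exp_mul_complex hd, hperiod, Complex.ofReal_zero, mul_zero, Complex.exp_zero,
    sub_zero, Complex.real_smul, ← hdT]
  push_cast
  field_simp

theorem AddCircle.liftIco_zero_coe_apply_of_mem_Icc {T : ℝ} [Fact (0 < T)] {B : Type*}
    {f : ℝ → B} (hper : f 0 = f T) {x : ℝ} (hx : x ∈ Set.Icc 0 T) :
    AddCircle.liftIco T 0 f x = f x := by
  rcases hx.2.lt_or_eq with hxT | rfl
  · exact AddCircle.liftIco_zero_coe_apply ⟨hx.1, hxT⟩
  · rw [AddCircle.coe_period, ← hper]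
    exact AddCircle.liftIco_zero_coe_apply ⟨le_rfl, Fact.out⟩

theorem hasSum_fourierCoeffOn_of_summable {T : ℝ} (hT : 0 < T) {f : ℝ → ℂ}
    (hf : ContinuousOn f (Set.Icc 0 T)) (hper : f 0 = f T)
    (hsum : Summable (fourierCoeffOn hT f)) {x : ℝ} (hx : x ∈ Set.Icc 0 T) :
    HasSum (fun n : ℤ => fourierCoeffOn hT f n • fourier n (x : AddCircle T)) (f x) := by
  have := Fact.mk hT
  let F : C(AddCircle T, ℂ) :=
    ⟨AddCircle.liftIco T 0 f, AddCircle.liftIco_zero_continuous hper hf⟩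
  have hcoeff : fourierCoeff F = fourierCoeffOn hT f := by
    funext n
    rw [ContinuousMap.coe_mk, fourierCoeff_liftIco_eq]
    congr 1
    simp
  have hFx : F x = f x := AddCircle.liftIco_zero_coe_apply_of_mem_Icc hper hx
  rw [← hcoeff, ← hFx]
  exact has_pointwise_sum_fourier_series_of_summable (hcoeff ▸ hsum) x

theorem summable_one_div_one_add_mul_sq {a : ℝ} (ha : 0 < a) :
    Summable fun k : ℤ => 1 / (1 + a * (k : ℝ) ^ 2) := by
  refine ((Real.summable_one_div_int_pow.2 one_lt_two).mul_left a⁻¹).of_norm_bounded_eventually ?_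
  filter_upwards [Filter.eventually_cofinite_ne 0] with k hk
  have hk2 : (0 : ℝ) < (k : ℝ) ^ 2 := by positivity
  rw [Real.norm_of_nonneg (by positivity), ← one_div, one_div_mul_one_div]
  exact one_div_le_one_div_of_le (by positivity) (by linarith)

theorem ofReal_sub_two_pi_I_mul_int_ne_zero {c : ℝ} (hc : c ≠ 0) (n : ℤ) :
    (c : ℂ) - 2 * π * I * n ≠ 0 := fun h => by
  simpa [hc] using congrArg Complex.re h

theorem fourierCoeffOn_exp_ofReal_mul {c : ℝ} (hc : c ≠ 0) (n : ℤ) :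
    fourierCoeffOn zero_lt_one (fun t : ℝ => cexp (c * t)) n
      = (cexp c - 1) / (c - 2 * π * I * n) := by
  have hres : (c : ℂ) * (1 : ℝ) ≠ 2 * π * I * n := by
    simpa [sub_eq_zero] using ofReal_sub_two_pi_I_mul_int_ne_zero hc n
  simpa using fourierCoeffOn_exp_mul zero_lt_one hres

noncomputable def expKernel (t : ℝ) : ℂ :=
  ((Real.exp t + Real.exp (1 - t)) / (2 * (Real.exp 1 - 1)) : ℝ)

theorem expKernel_zero_eq_one : expKernel 0 = expKernel 1 := by
  simp [expKernel, add_comm]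

theorem continuous_expKernel : Continuous expKernel := by
  unfold expKernel
  fun_prop

theorem fourierCoeffOn_expKernel (n : ℤ) :
    fourierCoeffOn zero_lt_one expKernel n = 1 / (1 + 4 * π ^ 2 * n ^ 2) := by
  have hsplit : expKernel = fun t : ℝ => (2 * (cexp 1 - 1))⁻¹ *
      ((fun t : ℝ => cexp ((1 : ℝ) * t)) + fun t : ℝ => cexp 1 * cexp ((-1 : ℝ) * t)) t := by
    funext t
    simp only [expKernel, Pi.add_apply, ← Complex.exp_add]
    push_cast
    ring_nf
  have hint (c : ℂ) : IntervalIntegrable (fun t : ℝ => cexp (c * t)) volume 0 1 :=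
    (by fun_prop : Continuous fun t : ℝ => cexp (c * t)).intervalIntegrable 0 1
  rw [hsplit, fourierCoeffOn.const_mul, fourierCoeffOn_add _ (hint _) ((hint _).const_mul _),
    fourierCoeffOn.const_mul, fourierCoeffOn_exp_ofReal_mul one_ne_zero,
    fourierCoeffOn_exp_ofReal_mul (by norm_num)]
  have he : cexp 1 - 1 ≠ 0 := by
    rw [sub_ne_zero, ← Complex.ofReal_one, ← Complex.ofReal_exp]
    exact_mod_cast (Real.exp_eq_one_iff 1).not.2 one_ne_zero
  have hplus := ofReal_sub_two_pi_I_mul_int_ne_zero one_ne_zero n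
  have hminus := ofReal_sub_two_pi_I_mul_int_ne_zero (c := -1) (by norm_num) n
  push_cast at hplus hminus ⊢
  have hfactor : 1 + 4 * π ^ 2 * n ^ 2 = (1 - 2 * π * I * n) * -(-1 - 2 * π * I * n) := by
    linear_combination (4 * π ^ 2 * n ^ 2 : ℂ) * Complex.I_sq
  rw [Complex.exp_neg, hfactor]
  field_simp
  ring

theorem norm_fourierCoeffOn_expKernel (n : ℤ) :
    ‖fourierCoeffOn zero_lt_one expKernel n‖ = 1 / (1 + 4 * π ^ 2 * (n : ℝ) ^ 2) := by
  have hreal : (1 + 4 * π ^ 2 * n ^ 2 : ℂ) = ((1 + 4 * π ^ 2 * n ^ 2 : ℝ) : ℂ) := by push_cast; ring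
  rw [fourierCoeffOn_expKernel, hreal, norm_div, norm_one, Complex.norm_of_nonneg (by positivity)]

theorem tsum_fourier_kernel (x : ℝ) (hx : x ∈ Set.Icc (0 : ℝ) 1) :
    Summable (fun k : ℤ =>
      ‖Complex.exp (2 * (π : ℂ) * (k : ℂ) * (x : ℂ) * Complex.I) /
        (1 + 4 * (π : ℂ) ^ 2 * (k : ℂ) ^ 2)‖) ∧
    ∑' k : ℤ, Complex.exp (2 * (π : ℂ) * (k : ℂ) * (x : ℂ) * Complex.I) /
        (1 + 4 * (π : ℂ) ^ 2 * (k : ℂ) ^ 2)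
      = (((Real.exp x + Real.exp (1 - x)) / (2 * (Real.exp 1 - 1)) : ℝ) : ℂ) := by
  have hterm (k : ℤ) : fourierCoeffOn zero_lt_one expKernel k • fourier k (x : AddCircle (1 : ℝ))
      = cexp (2 * π * k * x * I) / (1 + 4 * π ^ 2 * k ^ 2) := by
    rw [fourierCoeffOn_expKernel, fourier_coe_apply, smul_eq_mul, Complex.ofReal_one, div_one,
      one_div_mul_eq_div, mul_right_comm _ I, mul_right_comm _ I]
  have hnorm (k : ℤ) : ‖cexp (2 * π * k * x * I) / (1 + 4 * π ^ 2 * k ^ 2)‖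
      = 1 / (1 + 4 * π ^ 2 * (k : ℝ) ^ 2) := by
    rw [← hterm, norm_smul, show ‖fourier k (x : AddCircle (1 : ℝ))‖ = 1 from Circle.norm_coe _,
      mul_one, norm_fourierCoeffOn_expKernel]
  have hsummable : Summable fun k : ℤ => 1 / (1 + 4 * π ^ 2 * (k : ℝ) ^ 2) :=
    summable_one_div_one_add_mul_sq (by positivity)
  have hfourier := hasSum_fourierCoeffOn_of_summable zero_lt_one
    continuous_expKernel.continuousOn expKernel_zero_eq_one
    (.of_norm (hsummable.congr fun k => (norm_fourierCoeffOn_expKernel k).symm)) hx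
  exact ⟨hsummable.congr fun k => (hnorm k).symm,
    (hfourier.congr_fun fun k => (hterm k).symm).tsum_eq⟩
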